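/- arXiv:1503.07082 — 4 statements merged into one kernel-verified Lean document; each statement's English description precedes it below -/
import Mathlib

section
/- Let P be a finite planar point set, p ∈ P, and suppose p sees two points q₁, q₂ ∈ P lying on two distinct rays from p such that the angle between the rays at p is strictly less than π. If every point of P \ {p} lies on the ray from p through q₁ or the ray from p through q₂, and q₁, q₂ are the points on their rays closest to p, then q₁ and q₂ see each other. -/
/-- If every point of `P \ {p}` lies on one of two rays from `p` spanning an angle
less than `π` (linearly independent directions), and `q₁`, `q₂` are the closest
points of `P` to `p` on these rays, then `q₁` and `q₂` see each other. -/
theorem closest_points_on_two_rays_see_each_other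
    (P : Finset (ℝ × ℝ)) (p q₁ q₂ : ℝ × ℝ)
    (hp : p ∈ P) (h1 : q₁ ∈ P) (h2 : q₂ ∈ P)
    (hli : LinearIndependent ℝ ![q₁ - p, q₂ - p])
    (hray : ∀ r ∈ P, r ≠ p →
      (∃ s : ℝ, 0 < s ∧ r = p + s • (q₁ - p)) ∨
      (∃ s : ℝ, 0 < s ∧ r = p + s • (q₂ - p)))
    (hc1 : ∀ r ∈ P, r ∉ openSegment ℝ p q₁)
    (hc2 : ∀ r ∈ P, r ∉ openSegment ℝ p q₂) :
    ∀ r ∈ P, r ∉ openSegment ℝ q₁ q₂ := by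
  have hpair := LinearIndependent.pair_iff.mp hli
  intro r hr hmem
  obtain ⟨a, b, ha, hb, hab, hr'⟩ := hmem
  have key : r - p = a • (q₁ - p) + b • (q₂ - p) := by
    have : a • (q₁ - p) + b • (q₂ - p) = (a • q₁ + b • q₂) - (a + b) • p := by
      module
    rw [this, hab, hr', one_smul]
  by_cases hrp : r = p
  · have h0 : a • (q₁ - p) + b • (q₂ - p) = 0 := by
      rw [← key, hrp, sub_self]
    exact ha.ne' (hpair a b h0).1
  · rcases hray r hr hrp with ⟨s, hs, hse⟩ | ⟨s, hs, hse⟩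
    · have h0 : (s - a) • (q₁ - p) + (-b) • (q₂ - p) = 0 := by
        have : r - p = s • (q₁ - p) := by rw [hse]; module
        rw [this] at key
        linear_combination (norm := module) key
      exact hb.ne' (neg_eq_zero.mp (hpair _ _ h0).2)
    · have h0 : (-a) • (q₁ - p) + (s - b) • (q₂ - p) = 0 := by
        have : r - p = s • (q₂ - p) := by rw [hse]; module
        rw [this] at key
        linear_combination (norm := module) key
      exact ha.ne' (neg_eq_zero.mp (hpair _ _ h0).1)
end

section
/- Let P be a finite planar point set, p ∈ P, and q a neighbor of p in the visibility graph of P such that q has degree one in the induced subgraph on the neighborhood N(p). Then all points of P lie in one closed half-plane bounded by the line through p and q. -/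
/-- Two points of `P` see each other iff the open segment between them misses `P`. -/
def Sees (P : Finset (ℝ × ℝ)) (a b : ℝ × ℝ) : Prop :=
  a ≠ b ∧ ∀ r ∈ P, r ∉ openSegment ℝ a b

private lemma sees_of_min (P : Finset (ℝ × ℝ)) (f : ℝ × ℝ → ℝ)
    (hf : ∀ (a b : ℝ) (x y : ℝ × ℝ), a + b = 1 → f (a • x + b • y) = a * f x + b * f y)
    (z w : ℝ × ℝ) (hz : f z = 0) (hw : 0 < f w)
    (hmin : ∀ r ∈ P, 0 < f r → f w ≤ f r) :
    Sees P z w := by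
  constructor
  · intro h; rw [← h] at hw; linarith
  · intro r hr hseg
    obtain ⟨a, b, ha, hb, hab, heq⟩ := hseg
    have hfr : f r = b * f w := by
      rw [← heq, hf a b z w hab, hz]; ring
    have hb1 : b < 1 := by linarith
    have h1 : 0 < f r := by rw [hfr]; positivity
    have := hmin r hr h1
    nlinarith

private lemma exists_wit (P : Finset (ℝ × ℝ)) (p q : ℝ × ℝ) (f : ℝ × ℝ → ℝ)
    (hf : ∀ (a b : ℝ) (x y : ℝ × ℝ), a + b = 1 → f (a • x + b • y) = a * f x + b * f y)
    (hfp : f p = 0) (hfq : f q = 0)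
    (hb : ∃ b ∈ P, 0 < f b) :
    ∃ w ∈ P, 0 < f w ∧ Sees P p w ∧ Sees P q w := by
  obtain ⟨b0, hb0P, hb0⟩ := hb
  have hS : (P.filter (fun r => 0 < f r)).Nonempty :=
    ⟨b0, Finset.mem_filter.2 ⟨hb0P, hb0⟩⟩
  obtain ⟨w, hwS, hmin⟩ := Finset.exists_min_image _ f hS
  rw [Finset.mem_filter] at hwS
  have hmin' : ∀ r ∈ P, 0 < f r → f w ≤ f r := fun r hr h =>
    hmin r (Finset.mem_filter.2 ⟨hr, h⟩)
  exact ⟨w, hwS.1, hwS.2, sees_of_min P f hf p w hfp hwS.2 hmin',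
    sees_of_min P f hf q w hfq hwS.2 hmin'⟩

/-- Empty halfspace lemma: if `q` is a neighbor of `p` having degree one in the
subgraph of the visibility graph induced on `N(p)`, then all points of `P` lie in
one closed half-plane bounded by the line through `p` and `q`. -/
theorem empty_halfspace_of_degree_one_in_neighborhood
    (P : Finset (ℝ × ℝ)) (p q : ℝ × ℝ) (hp : p ∈ P) (hq : q ∈ P)
    (hvis : Sees P p q)
    (hdeg : ∃! q' : ℝ × ℝ, q' ∈ P ∧ Sees P p q' ∧ q' ≠ q ∧ Sees P q q') :
    ∃ w : ℝ × ℝ, w ≠ 0 ∧ w.1 * (q.1 - p.1) + w.2 * (q.2 - p.2) = 0 ∧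
      ∀ r ∈ P, 0 ≤ w.1 * (r.1 - p.1) + w.2 * (r.2 - p.2) := by
  obtain ⟨hpq, -⟩ := hvis
  set n : ℝ × ℝ := (p.2 - q.2, q.1 - p.1) with hn
  have hn0 : n ≠ 0 := by
    intro h
    apply hpq
    have h1 : p.2 - q.2 = 0 := congrArg Prod.fst h
    have h2 : q.1 - p.1 = 0 := congrArg Prod.snd h
    exact Prod.ext (by linarith) (by linarith)
  set f : ℝ × ℝ → ℝ := fun r => n.1 * (r.1 - p.1) + n.2 * (r.2 - p.2) with hfdef
  have hf : ∀ (a b : ℝ) (x y : ℝ × ℝ), a + b = 1 → f (a • x + b • y) = a * f x + b * f y := by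
    intro a b x y hab
    simp only [hfdef, Prod.smul_fst, Prod.smul_snd, Prod.fst_add, Prod.snd_add, smul_eq_mul]
    linear_combination (n.1 * p.1 + n.2 * p.2) * hab
  have hfneg : ∀ (a b : ℝ) (x y : ℝ × ℝ), a + b = 1 →
      (fun r => -(f r)) (a • x + b • y) = a * (fun r => -(f r)) x + b * (fun r => -(f r)) y := by
    intro a b x y hab
    simp only []
    rw [hf a b x y hab]; ring
  have hfp : f p = 0 := by simp [hfdef]
  have hfq : f q = 0 := by simp only [hfdef, hn]; ring
  by_cases hpos : ∀ r ∈ P, 0 ≤ f r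
  · exact ⟨n, hn0, by simp only [hn]; ring, hpos⟩
  by_cases hneg : ∀ r ∈ P, 0 ≤ -(f r)
  · refine ⟨-n, neg_ne_zero.2 hn0, ?_, ?_⟩
    · simp only [Prod.fst_neg, Prod.snd_neg, hn]; ring
    · intro r hr
      have := hneg r hr
      simp only [hfdef] at this
      simp only [Prod.fst_neg, Prod.snd_neg]
      linarith
  · push_neg at hpos hneg
    obtain ⟨b1, hb1P, hb1⟩ := hpos
    obtain ⟨b2, hb2P, hb2⟩ := hneg
    obtain ⟨w1, hw1P, hw1f, hw1p, hw1q⟩ :=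
      exists_wit P p q (fun r => -(f r)) hfneg (by simp [hfp]) (by simp [hfq])
        ⟨b1, hb1P, show (0:ℝ) < -(f b1) by linarith⟩
    obtain ⟨w2, hw2P, hw2f, hw2p, hw2q⟩ :=
      exists_wit P p q f hf hfp hfq ⟨b2, hb2P, by linarith⟩
    obtain ⟨x0, -, huniq⟩ := hdeg
    have hw1q' : w1 ≠ q := by intro h; rw [h, hfq] at hw1f; linarith
    have hw2q' : w2 ≠ q := by intro h; rw [h, hfq] at hw2f; linarith
    have e1 := huniq w1 ⟨hw1P, hw1p, hw1q', hw1q⟩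
    have e2 := huniq w2 ⟨hw2P, hw2p, hw2q', hw2q⟩
    rw [e1, ← e2] at hw1f
    simp only [hfdef] at hw1f hw2f
    linarith
end

section
/- Let P be a finite planar point set and p ∈ P. If q ∈ P \ {p} sees every point of N(p) (the set of points visible from p), then on the ray from p through q at most one point of P lies strictly between p and q; i.e., either q itself is visible from p, or q is the second point of P (after the first visible point) on its ray from p. -/
/-- If `q ≠ p` sees every point of the visibility neighborhood `N(p)`, then either
`q` is itself visible from `p`, or exactly one point of `P` lies strictly between
`p` and `q` (i.e. `q` is the second point on its ray from `p`). -/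
theorem point_seeing_all_neighbors_is_second_on_ray
    (P : Finset (ℝ × ℝ)) (p q : ℝ × ℝ) (hp : p ∈ P) (hq : q ∈ P) (hpq : q ≠ p)
    (hsee : ∀ r ∈ P, Sees P p r → r ≠ q → Sees P q r) :
    Sees P p q ∨ ∃! r : ℝ × ℝ, r ∈ P ∧ r ∈ openSegment ℝ p q := by
  by_cases h : ∀ r ∈ P, r ∉ openSegment ℝ p q
  · exact Or.inl ⟨hpq.symm, h⟩
  push_neg at h
  obtain ⟨r₁, hr₁P, hr₁seg⟩ := h
  have hqp : q - p ≠ 0 := sub_ne_zero.mpr hpq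
  have hnqp : (0:ℝ) < ‖q - p‖ := norm_pos_iff.mpr hqp
  classical
  set S : Finset (ℝ × ℝ) := P.filter (· ∈ openSegment ℝ p q) with hS
  have hSne : S.Nonempty := ⟨r₁, Finset.mem_filter.mpr ⟨hr₁P, hr₁seg⟩⟩
  obtain ⟨r₀, hr₀S, hmin⟩ := S.exists_min_image (dist p) hSne
  have hr₀P : r₀ ∈ P := (Finset.mem_filter.mp hr₀S).1
  have hr₀seg : r₀ ∈ openSegment ℝ p q := (Finset.mem_filter.mp hr₀S).2
  rw [openSegment_eq_image'] at hr₀seg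
  obtain ⟨t₀, ht₀, hrt₀⟩ := hr₀seg
  have hrt₀ : p + t₀ • (q - p) = r₀ := hrt₀
  obtain ⟨ht₀1, ht₀2⟩ := ht₀
  have hdist₀ : dist p r₀ = t₀ * ‖q - p‖ := by
    rw [dist_eq_norm, ← hrt₀]
    have : p - (p + t₀ • (q - p)) = (-t₀) • (q - p) := by module
    rw [this, norm_smul]
    simp [abs_of_pos ht₀1]
  -- a helper giving the parameter of any point of S
  have hparam : ∀ r ∈ S, ∃ t : ℝ, t ∈ Set.Ioo (0:ℝ) 1 ∧ p + t • (q - p) = r ∧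
      dist p r = t * ‖q - p‖ := by
    intro r hr
    have := (Finset.mem_filter.mp hr).2
    rw [openSegment_eq_image'] at this
    obtain ⟨t, ht, hrt⟩ := this
    refine ⟨t, ht, hrt, ?_⟩
    rw [dist_eq_norm, ← hrt]
    have : p - (p + t • (q - p)) = (-t) • (q - p) := by module
    rw [this, norm_smul]
    simp [abs_of_pos ht.1]
  -- r₀ sees p
  have hsee₀ : Sees P p r₀ := by
    constructor
    · intro hpr
      have : t₀ • (q - p) = 0 := by
        have := hrt₀
        rw [← hpr] at this
        simpa using this
      rcases smul_eq_zero.mp this with h1 | h1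
      · exact (ne_of_gt ht₀1) h1
      · exact hqp h1
    · intro s hsP hsseg
      rw [openSegment_eq_image'] at hsseg
      obtain ⟨u, hu, hsu⟩ := hsseg
      have hs' : p + (u * t₀) • (q - p) = s := by
        rw [← hsu, ← hrt₀]; module
      have hsS : s ∈ S := by
        refine Finset.mem_filter.mpr ⟨hsP, ?_⟩
        rw [openSegment_eq_image']
        exact ⟨u * t₀, ⟨mul_pos hu.1 ht₀1,
          lt_of_lt_of_le (by nlinarith [hu.2, hu.1] : u * t₀ < t₀) ht₀2.le⟩, hs'⟩
      have hds : dist p s = (u * t₀) * ‖q - p‖ := by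
        rw [dist_eq_norm, ← hs']
        have : p - (p + (u * t₀) • (q - p)) = (-(u * t₀)) • (q - p) := by module
        rw [this, norm_smul]
        simp [abs_mul, abs_of_pos hu.1, abs_of_pos ht₀1]
      have hle := hmin s hsS
      rw [hds, hdist₀] at hle
      nlinarith [mul_pos (mul_pos (by linarith [hu.2] : (0:ℝ) < 1 - u) ht₀1) hnqp]
  have hr₀q : r₀ ≠ q := by
    intro hrq
    have h2 : (t₀ - 1) • (q - p) = p + t₀ • (q - p) - q := by module
    rw [hrt₀, hrq, sub_self] at h2
    rcases smul_eq_zero.mp h2 with h1 | h1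
    · exact absurd (sub_eq_zero.mp h1) (by intro hh; linarith)
    · exact hqp h1
  have hseeq : Sees P q r₀ := hsee r₀ hr₀P hsee₀ hr₀q
  refine Or.inr ⟨r₀, ⟨hr₀P, (Finset.mem_filter.mp hr₀S).2⟩, ?_⟩
  rintro r ⟨hrP, hrseg⟩
  have hrS : r ∈ S := Finset.mem_filter.mpr ⟨hrP, hrseg⟩
  obtain ⟨t, ht, hrt, hdr⟩ := hparam r hrS
  obtain ⟨ht1, ht2⟩ := ht
  have hle := hmin r hrS
  rw [hdist₀, hdr] at hle
  have htle : t₀ ≤ t := le_of_mul_le_mul_right (by linarith) hnqp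
  rcases eq_or_lt_of_le htle with heq | hlt
  · rw [← hrt, ← hrt₀, heq]
  · exfalso
    apply hseeq.2 r hrP
    rw [openSegment_symm, openSegment_eq_image']
    refine ⟨(t - t₀) / (1 - t₀), ⟨div_pos (by linarith) (by linarith),
      (div_lt_one (by linarith)).mpr (by linarith)⟩, ?_⟩
    rw [← hrt, ← hrt₀]
    have h1 : (1:ℝ) - t₀ ≠ 0 := by linarith
    have hkey : (t - t₀) / (1 - t₀) * (1 - t₀) = t - t₀ := div_mul_cancel₀ _ h1
    match_scalars <;> field_simp <;> ring
end

section
/- Multiplication gadget correctness (affine version with ℓ_∞ at infinity): Let ℓ be the x-axis, and let points 0 = (0,0), 1 = (1,0), X = (x,0), Y = (y,0) with x, y ≠ 0. Let a, b be two distinct directions (nonzero non-horizontal vectors). Let c be the intersection of the line through X with direction a and the line through 1 with direction b; let d be the intersection of the line through Y with direction b and the line through 0 and c. Then the line through d with direction a meets the x-axis at the point (x·y, 0). -/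
/-- Von Staudt multiplication gadget (affine version with `ℓ_∞` at infinity):
with `0=(0,0)`, `1=(1,0)`, `X=(x,0)`, `Y=(y,0)` on the x-axis, directions `a`, `b`
non-horizontal, `c` the intersection of the line through `X` with direction `a`
and the line through `1` with direction `b`, `d` on the line through `Y` with
direction `b` and on the line through `0` and `c`, the line through `d` with
direction `a` meets the x-axis at `(x·y, 0)`. -/
theorem von_staudt_multiplication_gadget
    (x y : ℝ) (hx : x ≠ 0) (hy : y ≠ 0)
    (a b : ℝ × ℝ) (ha : a.2 ≠ 0) (hb : b.2 ≠ 0)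
    (c d : ℝ × ℝ) (t₁ t₂ t₃ t₄ t₅ z : ℝ)
    (hc₁ : c = (x, 0) + t₁ • a)
    (hc₂ : c = (1, 0) + t₂ • b)
    (hd₁ : d = (y, 0) + t₃ • b)
    (hd₂ : d = t₄ • c)
    (hz : (z, 0) = d + t₅ • a) :
    z = x * y := by
  have c1 : c.1 = x + t₁ * a.1 := by rw [hc₁]; simp
  have c2 : c.2 = t₁ * a.2 := by rw [hc₁]; simp
  have c1' : c.1 = 1 + t₂ * b.1 := by rw [hc₂]; simp
  have c2' : c.2 = t₂ * b.2 := by rw [hc₂]; simp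
  have d1 : d.1 = y + t₃ * b.1 := by rw [hd₁]; simp
  have d2 : d.2 = t₃ * b.2 := by rw [hd₁]; simp
  have d1' : d.1 = t₄ * c.1 := by rw [hd₂]; simp
  have d2' : d.2 = t₄ * c.2 := by rw [hd₂]; simp
  have z1 : z = d.1 + t₅ * a.1 := by
    have := congrArg Prod.fst hz; simpa using this
  have z2 : (0:ℝ) = d.2 + t₅ * a.2 := by
    have := congrArg Prod.snd hz; simpa using this
  -- t₅ = -(t₄ * t₁)
  have h5 : t₅ = -(t₄ * t₁) := by
    have : t₅ * a.2 = -(t₄ * t₁) * a.2 := by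
      have := d2'; rw [c2] at this
      linarith [z2, this]
    exact mul_right_cancel₀ ha this
  -- t₃ = t₄ * t₂
  have h3 : t₃ = t₄ * t₂ := by
    have : t₃ * b.2 = t₄ * t₂ * b.2 := by
      have h := d2'; rw [c2'] at h
      linarith [d2, h]
    exact mul_right_cancel₀ hb this
  -- t₄ = y
  have h4 : t₄ = y := by
    have hE : x + t₁ * a.1 = 1 + t₂ * b.1 := by rw [← c1, c1']
    have h := d1'
    rw [d1, c1', h3] at h
    nlinarith [h]
  have hE : x + t₁ * a.1 = 1 + t₂ * b.1 := by rw [← c1, c1']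
  have z1' : z = y + y * t₂ * b.1 - y * t₁ * a.1 := by
    rw [z1, d1, h3, h5, h4]; ring
  linear_combination z1' - y * hE
end
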